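/- arXiv:1405.1590 — 2 statements merged into one kernel-verified Lean document; each statement's English description precedes it below -/
import Mathlib

section
/- Let ‖·‖ be any norm on ℝ^ℕ and let τ' be the topology it induces. Then the open unit ball B = {x : ‖x‖ < 1} is not open in the product topology on ℝ^ℕ. -/
theorem stmt_1 (N : (ℕ → ℝ) → ℝ)
    (hpos : ∀ x, N x = 0 ↔ x = 0)
    (hhom : ∀ (t : ℝ) (x : ℕ → ℝ), N (t • x) = |t| * N x)
    (htri : ∀ x y, N (x + y) ≤ N x + N y) :
    ¬ IsOpen {x : ℕ → ℝ | N x < 1} := by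
  intro hopen
  have h0 : (0 : ℕ → ℝ) ∈ {x : ℕ → ℝ | N x < 1} := by
    simp [Set.mem_setOf_eq, (hpos 0).mpr rfl]
  obtain ⟨I, u, hu, hsub⟩ := (isOpen_pi_iff.mp hopen) 0 h0
  obtain ⟨j, hj⟩ := Infinite.exists_notMem_finset I
  set e : ℕ → ℝ := Pi.single j 1 with he
  have hene : e ≠ 0 := by
    intro h
    have := congrFun h j
    simp [he, Pi.single_eq_same] at this
  have hNe0 : N e ≠ 0 := fun h => hene ((hpos e).mp h)
  have hNeg : N (-e) = N e := by
    have := hhom (-1) e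
    simpa using this
  have hNe_nonneg : 0 ≤ N e := by
    have h1 : N (e + -e) ≤ N e + N (-e) := htri e (-e)
    have h2 : N (e + -e) = 0 := by
      rw [add_neg_cancel]; exact (hpos 0).mpr rfl
    nlinarith [hNeg]
  have hNe_pos : 0 < N e := lt_of_le_of_ne hNe_nonneg (Ne.symm hNe0)
  set x : ℕ → ℝ := (2 / N e) • e with hx
  have hxmem : x ∈ (I : Set ℕ).pi u := by
    intro i hi
    have hij : i ≠ j := fun h => hj (h ▸ hi)
    have : x i = 0 := by
      simp [hx, he, Pi.single_eq_of_ne hij]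
    rw [this]
    exact (hu i hi).2
  have hlt : N x < 1 := hsub hxmem
  have : N x = 2 := by
    rw [hx, hhom]
    rw [abs_of_pos (by positivity)]
    field_simp
  linarith
end

section
/- The topology induced on ℝ^ℕ by any norm is incomparable with the product topology: it is neither a subset nor a superset of the product topology. -/
open Topology
/-- The topology induced by a norm-like function `N` via its open balls. -/
def normTopology (N : (ℕ → ℝ) → ℝ) : TopologicalSpace (ℕ → ℝ) :=
  TopologicalSpace.generateFrom {s | ∃ x r, s = {y | N (y - x) < r}}

lemma myN_nonneg (N : (ℕ → ℝ) → ℝ)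
    (hpos : ∀ x, N x = 0 ↔ x = 0)
    (hhom : ∀ (t : ℝ) (x : ℕ → ℝ), N (t • x) = |t| * N x)
    (htri : ∀ x y, N (x + y) ≤ N x + N y) (x : ℕ → ℝ) : 0 ≤ N x := by
  have h0 : N 0 = 0 := (hpos 0).2 rfl
  have hneg : N (-x) = N x := by
    have := hhom (-1) x
    simpa using this
  have := htri x (-x)
  rw [add_neg_cancel, h0, hneg] at this
  linarith

lemma ball_subset_of_isOpen (N : (ℕ → ℝ) → ℝ)
    (hpos : ∀ x, N x = 0 ↔ x = 0)
    (hhom : ∀ (t : ℝ) (x : ℕ → ℝ), N (t • x) = |t| * N x)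
    (htri : ∀ x y, N (x + y) ≤ N x + N y)
    {s : Set (ℕ → ℝ)} (hs : IsOpen[normTopology N] s) :
    ∀ x ∈ s, ∃ r > 0, ∀ y, N (y - x) < r → y ∈ s := by
  have hs' : TopologicalSpace.GenerateOpen {s | ∃ x r, s = {y | N (y - x) < r}} s := hs
  clear hs
  induction hs' with
  | basic t ht =>
    obtain ⟨x₀, r₀, rfl⟩ := ht
    intro x hx
    refine ⟨r₀ - N (x - x₀), by simpa using hx, fun y hy => ?_⟩
    have : N (y - x₀) ≤ N (y - x) + N (x - x₀) := by
      have := htri (y - x) (x - x₀)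
      simpa [sub_add_sub_cancel] using this
    simp only [Set.mem_setOf_eq] at *
    linarith
  | univ => exact fun x _ => ⟨1, one_pos, fun _ _ => trivial⟩
  | inter t u _ _ iht ihu =>
    intro x hx
    obtain ⟨r₁, hr₁, h₁⟩ := iht x hx.1
    obtain ⟨r₂, hr₂, h₂⟩ := ihu x hx.2
    exact ⟨min r₁ r₂, lt_min hr₁ hr₂, fun y hy =>
      ⟨h₁ y (hy.trans_le (min_le_left _ _)), h₂ y (hy.trans_le (min_le_right _ _))⟩⟩
  | sUnion S _ ih =>
    intro x hx
    obtain ⟨t, htS, hxt⟩ := hx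
    obtain ⟨r, hr, h⟩ := ih t htS x hxt
    exact ⟨r, hr, fun y hy => ⟨t, htS, h y hy⟩⟩

theorem stmt_4 (N : (ℕ → ℝ) → ℝ)
    (hpos : ∀ x, N x = 0 ↔ x = 0)
    (hhom : ∀ (t : ℝ) (x : ℕ → ℝ), N (t • x) = |t| * N x)
    (htri : ∀ x y, N (x + y) ≤ N x + N y) :
    (¬ ∀ s : Set (ℕ → ℝ),
        IsOpen[normTopology N] s → IsOpen[Pi.topologicalSpace] s) ∧
    (¬ ∀ s : Set (ℕ → ℝ),
        IsOpen[Pi.topologicalSpace] s → IsOpen[normTopology N] s) := by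
  have h0 : N 0 = 0 := (hpos 0).2 rfl
  have hnn := myN_nonneg N hpos hhom htri
  constructor
  · -- the unit ball is norm-open but not product-open
    intro h
    have hball : IsOpen[normTopology N] {y | N (y - 0) < 1} :=
      TopologicalSpace.GenerateOpen.basic _ ⟨0, 1, rfl⟩
    have hopen : IsOpen[Pi.topologicalSpace] {y : ℕ → ℝ | N (y - 0) < 1} := h _ hball
    have h0mem : (0 : ℕ → ℝ) ∈ {y : ℕ → ℝ | N (y - 0) < 1} := by
      simp [h0]
    rw [isOpen_pi_iff] at hopen
    obtain ⟨I, u, hu, hsub⟩ := hopen 0 h0mem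
    set n : ℕ := I.sup id + 1 with hn
    have hnI : n ∉ I := by
      intro hmem
      have : n ≤ I.sup id := Finset.le_sup (f := id) hmem
      omega
    set e : ℕ → ℝ := Pi.single n 1 with he
    have hNe : 0 < N e := by
      rcases lt_or_eq_of_le (hnn e) with h | h
      · exact h
      · exfalso
        have := (hpos e).1 h.symm
        have := congrFun this n
        simp [he] at this
    set t : ℝ := 2 / N e with ht
    have htpos : 0 < t := by positivity
    have hmem : t • e ∈ (↑I : Set ℕ).pi u := by
      intro i hi
      have hine : i ≠ n := fun h => hnI (h ▸ hi)
      have hzero : (t • e) i = 0 := by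
        simp [he, Pi.single_apply, hine]
      rw [hzero]
      have := (hu i hi).2
      simpa using this
    have := hsub hmem
    simp only [Set.mem_setOf_eq, sub_zero] at this
    rw [hhom] at this
    rw [abs_of_pos htpos, ht, div_mul_cancel₀] at this
    · linarith
    · exact ne_of_gt hNe
  · -- product topology is not coarser
    intro h
    -- for each n, the set {y | |y n| < 1} is product-open, hence norm-open
    have key : ∀ n : ℕ, ∃ r > 0, ∀ y : ℕ → ℝ, N y < r → |y n| < 1 := by
      intro n
      have hopen : IsOpen[Pi.topologicalSpace] ((fun y : ℕ → ℝ => y n) ⁻¹' Set.Ioo (-1) 1) :=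
        (continuous_apply n).isOpen_preimage _ isOpen_Ioo
      have hnorm := h _ hopen
      have h0mem : (0 : ℕ → ℝ) ∈ (fun y : ℕ → ℝ => y n) ⁻¹' Set.Ioo (-1) 1 := by
        simp
      obtain ⟨r, hr, hb⟩ := ball_subset_of_isOpen N hpos hhom htri hnorm 0 h0mem
      refine ⟨r, hr, fun y hy => ?_⟩
      have := hb y (by simpa using hy)
      simp only [Set.mem_preimage, Set.mem_Ioo] at this
      exact abs_lt.2 this
    choose r hr hball using key
    -- coordinate bound: r n * |x n| ≤ 2 * N x
    have hbd : ∀ (x : ℕ → ℝ) (n : ℕ), r n * |x n| ≤ 2 * N x := by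
      intro x n
      rcases eq_or_ne x 0 with rfl | hx
      · simp [h0]
      · have hNx : 0 < N x := by
          rcases lt_or_eq_of_le (hnn x) with h' | h'
          · exact h'
          · exact absurd ((hpos x).1 h'.symm) hx
        have hrn := hr n
        set t : ℝ := r n / (2 * N x) with ht
        have htpos : 0 < t := by positivity
        have hNtx : N (t • x) < r n := by
          rw [hhom, abs_of_pos htpos, ht]
          rw [div_mul_eq_mul_div, div_lt_iff₀ (by positivity)]
          nlinarith
        have := hball n _ hNtx
        have h1 : |(t • x) n| = t * |x n| := by
          simp [abs_mul, abs_of_pos htpos]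
        rw [h1, ht] at this
        have h2 : r n / (2 * N x) * |x n| < 1 := this
        have := (div_mul_eq_mul_div (r n) (2 * N x) |x n|) ▸ h2
        have h3 : r n * |x n| < 2 * N x := by
          rwa [div_lt_one (by positivity)] at this
        linarith
    -- build the bad vector
    set z : ℕ → ℝ := fun n => 2 * (n + 1) / r n with hz
    obtain ⟨n, hn⟩ := exists_nat_gt (N z)
    have hrn := hr n
    have hzn : |z n| = 2 * (n + 1) / r n := by
      rw [hz]
      exact abs_of_pos (by positivity)
    have := hbd z n
    rw [hzn, mul_div_cancel₀ _ (ne_of_gt (hr n))] at this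
    have : (n : ℝ) + 1 ≤ N z := by linarith
    linarith
end
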